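/- Let T: X → X be a homeomorphism of a compact metric space which is minimal (every orbit is dense), and let f: X → R be continuous. If there exist a point x₀ ∈ X and a constant C such that |Σ_{k=0}^{n−1} f(T^k x₀)| ≤ C for all n ≥ 1, then there exists a bounded (indeed continuous) function u: X → R with u(Tx) − u(x) = f(x) for all x ∈ X. -/

import Mathlib

/-!
Consider the skew product `F (x, t) = (T x, t + f x)` on `X × ℝ`. Its iterates add Birkhoff sums
in the fibre, so the forward orbit of `(x₀, 0)` is bounded and its closure is a nonempty compact
invariant set; by Zorn it contains a minimal one, `M`. Since `F` commutes with vertical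
translations, two points of `M` in a common fibre at distance `s ≠ 0` would make `M` invariant
under translation by `s`, contradicting its boundedness. The projection of `M` to `X` is closed and
`T`-invariant, hence all of `X` by minimality of `T`. So `M` is the graph of a function `u`,
continuous because its graph is compact, and invariance of the graph under `F` is exactly
`u (T x) = u x + f x`.
-/

open Set Pointwise Function MulAction

section Invariant

variable {Y : Type*} [TopologicalSpace Y] {F : Y → Y}

def IsNonemptyCompactInvariant (F : Y → Y) (A : Set Y) : Prop :=
  A.Nonempty ∧ IsCompact A ∧ MapsTo F A A

theorem isNonemptyCompactInvariant_closure_orbit [T2Space Y] (hF : Continuous F) {K : Set Y}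
    (hK : IsCompact K) {y : Y} (horb : ∀ n, F^[n] y ∈ K) :
    IsNonemptyCompactInvariant F (closure (range fun n => F^[n] y)) := by
  refine ⟨⟨y, subset_closure ⟨0, rfl⟩⟩, hK.closure_of_subset (range_subset_iff.2 horb), ?_⟩
  refine MapsTo.closure ?_ hF
  rintro _ ⟨n, rfl⟩
  exact ⟨n + 1, iterate_succ_apply' F n y⟩

theorem IsNonemptyCompactInvariant.exists_minimal [T2Space Y] {K : Set Y}
    (hK : IsNonemptyCompactInvariant F K) :
    ∃ M ⊆ K, Minimal (IsNonemptyCompactInvariant F) M := by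
  refine zorn_superset_nonempty {A | IsNonemptyCompactInvariant F A}
    (fun c hc hchain ⟨A, hA⟩ => ⟨⋂₀ c, ⟨?_, ?_, ?_⟩, fun _ => sInter_subset_of_mem⟩) K hK
  · have : Nonempty c := ⟨⟨A, hA⟩⟩
    exact IsCompact.nonempty_sInter_of_directed_nonempty_isCompact_isClosed
      (show IsChain (· ⊇ ·) c from hchain.symm).directedOn (fun B hB => (hc hB).1)
      (fun B hB => (hc hB).2.1) (fun B hB => (hc hB).2.1.isClosed)
  · exact (hc hA).2.1.of_isClosed_subset (isClosed_sInter fun B hB => (hc hB).2.1.isClosed)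
      (sInter_subset_of_mem hA)
  · exact fun p hp => mem_sInter.2 fun B hB => (hc hB).2.2 (mem_sInter.1 hp B hB)

theorem Minimal.image_eq_of_isNonemptyCompactInvariant {M : Set Y}
    (hM : Minimal (IsNonemptyCompactInvariant F) M) (hF : Continuous F) : F '' M = M := by
  obtain ⟨hne, hcpt, hmaps⟩ := hM.prop
  exact hM.eq_of_subset ⟨hne.image F, hcpt.image hF,
    fun p hp => mem_image_of_mem F (hmaps.image_subset hp)⟩ hmaps.image_subset

end Invariant

theorem Equiv.Perm.eq_univ_of_isClosed_of_image_eq {X : Type*} [TopologicalSpace X]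
    {σ : Equiv.Perm X} (hσ : ∀ x, Dense (range fun n : ℤ => (σ ^ n) x)) {A : Set X}
    (hA : IsClosed A) (hne : A.Nonempty) (hσA : σ '' A = A) : A = univ := by
  obtain ⟨a, ha⟩ := hne
  have hstab : σ ∈ stabilizer (Equiv.Perm X) A := by
    rwa [mem_stabilizer_iff, ← image_smul]
  have horbit : range (fun n : ℤ => (σ ^ n) a) ⊆ A := by
    rintro _ ⟨n, rfl⟩
    have := smul_mem_smul_set (a := σ ^ n) ha
    rwa [mem_stabilizer_iff.1 ((stabilizer _ A).zpow_mem hstab n)] at this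
  exact eq_univ_of_univ_subset ((hσ a).closure_eq ▸ closure_minimal horbit hA)

theorem continuous_of_isCompact_graph {X Z : Type*} [TopologicalSpace X] [T2Space X]
    [TopologicalSpace Z] {u : X → Z} (hu : IsCompact (range fun x => (x, u x))) :
    Continuous u := by
  refine continuous_iff_isClosed.2 fun C hC => ?_
  have : u ⁻¹' C = Prod.fst '' (range (fun x => (x, u x)) ∩ Prod.snd ⁻¹' C) := by
    ext x; simp
  rw [this]
  exact ((hu.inter_right (hC.preimage continuous_snd)).image continuous_fst).isClosed

theorem IsCompact.exists_continuous_graph_eq {X Z : Type*} [TopologicalSpace X] [T2Space X]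
    [TopologicalSpace Z] {M : Set (X × Z)} (hM : IsCompact M) (h : ∀ x, ∃! z, (x, z) ∈ M) :
    ∃ u : X → Z, Continuous u ∧ ∀ x z, (x, z) ∈ M ↔ z = u x := by
  choose u hu huniq using h
  have hgraph : ∀ x z, (x, z) ∈ M ↔ z = u x :=
    fun x z => ⟨huniq x z, fun hz => hz ▸ hu x⟩
  refine ⟨u, continuous_of_isCompact_graph ?_, hgraph⟩
  convert hM
  ext ⟨x, z⟩
  simp [hgraph, eq_comm]

theorem eq_zero_of_forall_add_nat_mul_mem {S : Set ℝ} (hS : Bornology.IsBounded S) {t s : ℝ}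
    (h : ∀ n : ℕ, t + n * s ∈ S) : s = 0 := by
  obtain ⟨R, hR⟩ := hS.exists_norm_le
  by_contra hs
  obtain ⟨n, hn⟩ := exists_nat_gt ((R + |t|) / |s|)
  rw [div_lt_iff₀ (abs_pos.2 hs)] at hn
  have h1 : |t + n * s| ≤ R := hR _ (h n)
  have h2 : (n : ℝ) * |s| ≤ |t + n * s| + |t| := by
    calc (n : ℝ) * |s| = |t + n * s - t| := by simp [abs_mul]
      _ ≤ |t + n * s| + |t| := abs_sub _ _
  linarith

section SkewProduct

variable {X : Type*} (T : X → X) (f : X → ℝ)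

def skewProduct (p : X × ℝ) : X × ℝ := (T p.1, p.2 + f p.1)

theorem skewProduct_iterate_apply (n : ℕ) (x : X) (t : ℝ) :
    (skewProduct T f)^[n] (x, t) = (T^[n] x, t + birkhoffSum T f n x) := by
  induction n with
  | zero => simp
  | succ n ih =>
    rw [iterate_succ_apply', ih, iterate_succ_apply', birkhoffSum_succ, ← add_assoc]
    rfl

variable [TopologicalSpace X]

theorem continuous_skewProduct (hT : Continuous T) (hf : Continuous f) :
    Continuous (skewProduct T f) :=
  (hT.comp continuous_fst).prodMk (continuous_snd.add (hf.comp continuous_fst))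

variable {T f} [T2Space X] {M : Set (X × ℝ)}

theorem Minimal.snd_eq_of_skewProduct
    (hM : Minimal (IsNonemptyCompactInvariant (skewProduct T f)) M)
    {x : X} {t t' : ℝ} (ht : (x, t) ∈ M) (ht' : (x, t') ∈ M) : t = t' := by
  obtain ⟨-, hcpt, hmaps⟩ := hM.prop
  set s := t' - t
  let shift : X × ℝ ≃ₜ X × ℝ := (Homeomorph.refl X).prodCongr (Homeomorph.addRight s)
  have hshift_maps : MapsTo (skewProduct T f) (shift ⁻¹' M) (shift ⁻¹' M) := fun p hp => by
    simpa [shift, skewProduct, add_right_comm] using hmaps hp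
  have hM_shift : M ∩ shift ⁻¹' M = M := hM.eq_of_subset
    ⟨⟨(x, t), ht, by simpa [shift, s] using ht'⟩, hcpt.inter (shift.isCompact_preimage.2 hcpt),
      (hmaps.mono_left inter_subset_left).inter (hshift_maps.mono_left inter_subset_right)⟩
    inter_subset_left
  have hiter : ∀ n : ℕ, (x, t + n * s) ∈ M := by
    intro n
    induction n with
    | zero => simpa using ht
    | succ n ih =>
      have := (hM_shift.symm ▸ ih : (x, t + n * s) ∈ M ∩ shift ⁻¹' M).2
      simpa [shift, add_one_mul, add_assoc] using this
  have hs : s = 0 := eq_zero_of_forall_add_nat_mul_mem (hcpt.image continuous_snd).isBounded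
    fun n => ⟨_, hiter n, rfl⟩
  linarith

end SkewProduct

/-- Gottschalk–Hedlund theorem: for a minimal homeomorphism `T` of a compact
metric space and continuous `f`, boundedness of the Birkhoff sums of `f` along
a single orbit implies the cohomological equation `u ∘ T - u = f` has a
continuous (in particular bounded) solution. -/
theorem stmt5 {X : Type*} [MetricSpace X] [CompactSpace X]
    (T : X ≃ₜ X)
    (hmin : ∀ x : X, Dense (Set.range fun n : ℤ => (T.toEquiv ^ n) x))
    (f : X → ℝ) (hf : Continuous f)
    (x₀ : X) (C : ℝ)
    (hbound : ∀ n ≥ 1, |∑ k ∈ Finset.range n, f ((⇑T)^[k] x₀)| ≤ C) :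
    ∃ u : X → ℝ, Continuous u ∧ ∀ x, u (T x) - u x = f x := by
  set F := skewProduct T f
  have hF : Continuous F := continuous_skewProduct T f T.continuous hf
  have horbit : ∀ n, F^[n] (x₀, 0) ∈ univ ×ˢ Metric.closedBall 0 |C| := by
    intro n
    rw [skewProduct_iterate_apply, zero_add]
    refine ⟨mem_univ _, mem_closedBall_zero_iff.2 ?_⟩
    rcases Nat.eq_zero_or_pos n with rfl | hn
    · simp
    · exact (hbound n hn).trans (le_abs_self C)
  obtain ⟨M, -, hM⟩ := (isNonemptyCompactInvariant_closure_orbit hF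
    (isCompact_univ.prod (isCompact_closedBall 0 |C|)) horbit).exists_minimal
  obtain ⟨hne, hcpt, hmaps⟩ := hM.prop
  have hproj : Prod.fst '' M = univ := by
    refine Equiv.Perm.eq_univ_of_isClosed_of_image_eq hmin (hcpt.image continuous_fst).isClosed
      (hne.image _) ?_
    conv_rhs => rw [← hM.image_eq_of_isNonemptyCompactInvariant hF]
    simp only [image_image]
    rfl
  have hgraph : ∀ x, ∃! t, (x, t) ∈ M := by
    intro x
    obtain ⟨⟨_, t⟩, ht, rfl⟩ := hproj.symm ▸ mem_univ x
    exact ⟨t, ht, fun t' ht' => hM.snd_eq_of_skewProduct ht' ht⟩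
  obtain ⟨u, hu, hM_eq⟩ := hcpt.exists_continuous_graph_eq hgraph
  refine ⟨u, hu, fun x => ?_⟩
  have : u x + f x = u (T x) := (hM_eq _ _).1 (hmaps ((hM_eq x (u x)).2 rfl))
  linarith
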